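/- Let p be an odd prime, G = GL₂(𝔽_p), N the normalizer of the diagonal torus, and N'' the normalizer of the split Cartan C'' = {[[x,y],[y,x]] : x² ≠ y²}. Then in ℤ[N\G/N], the operator NN'' × N''N equals ((p−1)/2)·N + Σ_t Nσ_tN, where the sum runs over t ∈ (𝔽_p∖{1})/∼ (t ∼ t⁻¹) with t a nonzero square mod p. -/

import Mathlib

open Matrix Pointwise
open scoped Classical

noncomputable section

abbrev GL2 (p : ℕ) := GL (Fin 2) (ZMod p)

namespace Chen

variable (p : ℕ)

/-- The Borel subgroup of upper triangular matrices in `GL₂(𝔽_p)`. -/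
def Bor : Subgroup (GL2 p) where
  carrier := {g | (g : Matrix (Fin 2) (Fin 2) (ZMod p)) 1 0 = 0}
  one_mem' := by
    show ((1 : GL2 p) : Matrix (Fin 2) (Fin 2) (ZMod p)) 1 0 = 0
    simp [Matrix.one_apply]
  mul_mem' := by
    intro a b ha hb
    show ((a * b : GL2 p) : Matrix (Fin 2) (Fin 2) (ZMod p)) 1 0 = 0
    simp only [Set.mem_setOf_eq] at ha hb
    rw [Units.val_mul, Matrix.mul_apply, Fin.sum_univ_two, ha, hb]
    ring
  inv_mem' := by
    intro a ha
    show ((a⁻¹ : GL2 p) : Matrix (Fin 2) (Fin 2) (ZMod p)) 1 0 = 0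
    simp only [Set.mem_setOf_eq] at ha
    rw [Matrix.coe_units_inv, Matrix.inv_def]
    simp [Matrix.adjugate_fin_two, ha]

/-- The split (diagonal) Cartan subgroup of `GL₂(𝔽_p)`. -/
def Cs : Subgroup (GL2 p) where
  carrier := {g | (g : Matrix (Fin 2) (Fin 2) (ZMod p)) 0 1 = 0 ∧
      (g : Matrix (Fin 2) (Fin 2) (ZMod p)) 1 0 = 0}
  one_mem' := by
    constructor <;>
    · show ((1 : GL2 p) : Matrix (Fin 2) (Fin 2) (ZMod p)) _ _ = 0
      simp [Matrix.one_apply]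
  mul_mem' := by
    intro a b ha hb
    simp only [Set.mem_setOf_eq] at ha hb ⊢
    constructor <;>
    · show ((a * b : GL2 p) : Matrix (Fin 2) (Fin 2) (ZMod p)) _ _ = 0
      rw [Units.val_mul, Matrix.mul_apply, Fin.sum_univ_two]
      simp [ha.1, ha.2, hb.1, hb.2]
  inv_mem' := by
    intro a ha
    simp only [Set.mem_setOf_eq] at ha ⊢
    constructor <;>
    · show ((a⁻¹ : GL2 p) : Matrix (Fin 2) (Fin 2) (ZMod p)) _ _ = 0
      rw [Matrix.coe_units_inv, Matrix.inv_def]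
      simp [Matrix.adjugate_fin_two, ha.1, ha.2]

/-- A (generalized) Cartan subgroup `{[[x, u*y],[y, x]]}` of `GL₂(𝔽_p)`;
for `u = λ` a non-square this is the nonsplit Cartan `C'`, for `u = 1` the split Cartan `C''`. -/
def Cgen (u : ZMod p) : Subgroup (GL2 p) where
  carrier := {g | (g : Matrix (Fin 2) (Fin 2) (ZMod p)) 0 0 =
      (g : Matrix (Fin 2) (Fin 2) (ZMod p)) 1 1 ∧
      (g : Matrix (Fin 2) (Fin 2) (ZMod p)) 0 1 =
      u * (g : Matrix (Fin 2) (Fin 2) (ZMod p)) 1 0}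
  one_mem' := by
    constructor <;> simp [Matrix.one_apply]
  mul_mem' := by
    intro a b ha hb
    simp only [Set.mem_setOf_eq] at ha hb ⊢
    obtain ⟨ha1, ha2⟩ := ha
    obtain ⟨hb1, hb2⟩ := hb
    constructor <;>
    · show ((a * b : GL2 p) : Matrix (Fin 2) (Fin 2) (ZMod p)) _ _ =
        _
      simp only [Units.val_mul, Matrix.mul_apply, Fin.sum_univ_two]
      rw [ha1, ha2, hb1, hb2]
      ring
  inv_mem' := by
    intro a ha
    simp only [Set.mem_setOf_eq] at ha ⊢
    obtain ⟨ha1, ha2⟩ := ha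
    constructor <;>
    · show ((a⁻¹ : GL2 p) : Matrix (Fin 2) (Fin 2) (ZMod p)) _ _ = _
      rw [Matrix.coe_units_inv, Matrix.inv_def]
      simp [Matrix.adjugate_fin_two, ha1, ha2]
      try ring

/-- `N`, the normalizer of the split (diagonal) Cartan subgroup. -/
def Nspl : Subgroup (GL2 p) := Subgroup.normalizer (Cs p : Set (GL2 p))

/-- `N'`, the normalizer of the nonsplit Cartan subgroup (for `λ` a non-square). -/
def Nns (lam : ZMod p) : Subgroup (GL2 p) := Subgroup.normalizer (Cgen p lam : Set (GL2 p))

/-- `N''`, the normalizer of the split Cartan `C'' = {[[x,y],[y,x]]}`. -/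
def Nspl' : Subgroup (GL2 p) := Subgroup.normalizer (Cgen p 1 : Set (GL2 p))

/-- The double coset `N σ_t N` where `σ_t = [[1,1],[1,t]]`. -/
def dosetN (t : ZMod p) : Set (GL2 p) :=
  {g | ∃ a ∈ Nspl p, ∃ b ∈ Nspl p,
    ((a⁻¹ * g * b⁻¹ : GL2 p) : Matrix (Fin 2) (Fin 2) (ZMod p)) = !![1, 1; 1, t]}

/-- The double coset operator `ℝ[G/H] → ℝ[G/K]` (coefficients in `R`) attached to a
left-`H`-invariant, right-`K`-invariant set `S ⊆ G`: the basis vector `xH` is sent to the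
sum of the `K`-cosets contained in `x·S`. -/
def T (R : Type) [CommRing R] {G : Type} [Group G] [Fintype G] (H K : Subgroup G)
    (S : Set G) : ((G ⧸ H) → R) →ₗ[R] ((G ⧸ K) → R) where
  toFun v c := ∑ d : G ⧸ H,
    v d * (if c ∈ QuotientGroup.mk '' ((Quotient.out d) • S) then 1 else 0)
  map_add' := by
    intro u v
    funext c
    simp only [Pi.add_apply]
    rw [← Finset.sum_add_distrib]
    refine Finset.sum_congr rfl fun d _ => ?_
    ring
  map_smul' := by
    intro a v
    funext c
    simp only [Pi.smul_apply, smul_eq_mul, RingHom.id_apply]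
    rw [Finset.mul_sum]
    refine Finset.sum_congr rfl fun d _ => ?_
    ring


variable {p : ℕ}

lemma ent_mul (a b : GL2 p) (i j : Fin 2) :
    ((a*b : GL2 p) : Matrix (Fin 2) (Fin 2) (ZMod p)) i j =
      (a : Matrix (Fin 2) (Fin 2) (ZMod p)) i 0 * (b : Matrix (Fin 2) (Fin 2) (ZMod p)) 0 j
      + (a : Matrix (Fin 2) (Fin 2) (ZMod p)) i 1 * (b : Matrix (Fin 2) (Fin 2) (ZMod p)) 1 j := by
  rw [Units.val_mul, Matrix.mul_apply, Fin.sum_univ_two]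

lemma det_ne [Fact p.Prime] (g : GL2 p) :
    (g : Matrix (Fin 2) (Fin 2) (ZMod p)) 0 0 * (g : Matrix (Fin 2) (Fin 2) (ZMod p)) 1 1
    - (g : Matrix (Fin 2) (Fin 2) (ZMod p)) 0 1 * (g : Matrix (Fin 2) (Fin 2) (ZMod p)) 1 0 ≠ 0 := by
  have h : IsUnit (g : Matrix (Fin 2) (Fin 2) (ZMod p)).det :=
    (Matrix.isUnit_iff_isUnit_det _).mp g.isUnit
  rw [Matrix.det_fin_two] at h
  exact h.ne_zero

def mkU (m minv : Matrix (Fin 2) (Fin 2) (ZMod p)) (h1 : m * minv = 1) (h2 : minv * m = 1) :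
    GL2 p := ⟨m, minv, h1, h2⟩

variable [Fact p.Prime]

def dU (a d : ZMod p) (ha : a ≠ 0) (hd : d ≠ 0) : GL2 p :=
  mkU !![a,0;0,d] !![a⁻¹,0;0,d⁻¹]
    (by rw [Matrix.mul_fin_two, show (1 : Matrix (Fin 2) (Fin 2) (ZMod p)) = !![1,0;0,1] from one_fin_two]
        congr 1 <;> field_simp <;> simp)
    (by rw [Matrix.mul_fin_two, show (1 : Matrix (Fin 2) (Fin 2) (ZMod p)) = !![1,0;0,1] from one_fin_two]
        congr 1 <;> field_simp <;> simp)

def aU (b c : ZMod p) (hb : b ≠ 0) (hc : c ≠ 0) : GL2 p :=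
  mkU !![0,b;c,0] !![0,c⁻¹;b⁻¹,0]
    (by rw [Matrix.mul_fin_two, show (1 : Matrix (Fin 2) (Fin 2) (ZMod p)) = !![1,0;0,1] from one_fin_two]
        congr 1 <;> field_simp <;> simp)
    (by rw [Matrix.mul_fin_two, show (1 : Matrix (Fin 2) (Fin 2) (ZMod p)) = !![1,0;0,1] from one_fin_two]
        congr 1 <;> field_simp <;> simp)

@[simp] lemma dU_val (a d ha hd) : ((dU (p:=p) a d ha hd) : Matrix (Fin 2) (Fin 2) (ZMod p)) = !![a,0;0,d] := rfl
@[simp] lemma dU_inv_val (a d ha hd) : (((dU (p:=p) a d ha hd)⁻¹ : GL2 p) : Matrix (Fin 2) (Fin 2) (ZMod p)) = !![a⁻¹,0;0,d⁻¹] := rfl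
@[simp] lemma aU_val (b c hb hc) : ((aU (p:=p) b c hb hc) : Matrix (Fin 2) (Fin 2) (ZMod p)) = !![0,b;c,0] := rfl
@[simp] lemma aU_inv_val (b c hb hc) : (((aU (p:=p) b c hb hc)⁻¹ : GL2 p) : Matrix (Fin 2) (Fin 2) (ZMod p)) = !![0,c⁻¹;b⁻¹,0] := rfl

section
variable {α : Type*} (a b c d : α)
@[simp] lemma m00 : !![a,b;c,d] 0 0 = a := rfl
@[simp] lemma m01 : !![a,b;c,d] 0 1 = b := rfl
@[simp] lemma m10 : !![a,b;c,d] 1 0 = c := rfl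
@[simp] lemma m11 : !![a,b;c,d] 1 1 = d := rfl
end
lemma M2ext {α : Type*} {a b c d a' b' c' d' : α} (h1 : a = a') (h2 : b = b') (h3 : c = c') (h4 : d = d') :
    !![a,b;c,d] = !![a',b';c',d'] := by subst h1 h2 h3 h4; rfl

def mono (m : Matrix (Fin 2) (Fin 2) (ZMod p)) : Prop :=
  (m 0 1 = 0 ∧ m 1 0 = 0) ∨ (m 0 0 = 0 ∧ m 1 1 = 0)

lemma mono_cases {g : GL2 p} (h : mono (g : Matrix (Fin 2) (Fin 2) (ZMod p))) :
    (∃ a d ha hd, g = dU a d ha hd) ∨ (∃ b c hb hc, g = aU b c hb hc) := by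
  have hd := det_ne g
  rcases h with ⟨h1, h2⟩ | ⟨h1, h2⟩
  · rw [h1, h2] at hd
    simp only [mul_zero, sub_zero] at hd
    refine Or.inl ⟨_, _, left_ne_zero_of_mul hd, right_ne_zero_of_mul hd, Units.ext ?_⟩
    rw [dU_val]
    rw [Matrix.eta_fin_two (g : Matrix (Fin 2) (Fin 2) (ZMod p)), h1, h2]
    simp
  · rw [h1, h2] at hd
    simp only [zero_mul, zero_sub, neg_ne_zero] at hd
    refine Or.inr ⟨_, _, left_ne_zero_of_mul hd, right_ne_zero_of_mul hd, Units.ext ?_⟩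
    rw [aU_val]
    rw [Matrix.eta_fin_two (g : Matrix (Fin 2) (Fin 2) (ZMod p)), h1, h2]
    simp

lemma mem_Cs_iff (g : GL2 p) : g ∈ Cs p ↔
    (g : Matrix (Fin 2) (Fin 2) (ZMod p)) 0 1 = 0 ∧ (g : Matrix (Fin 2) (Fin 2) (ZMod p)) 1 0 = 0 :=
  Iff.rfl

lemma dU_mem_Cs (a d ha hd) : dU (p:=p) a d ha hd ∈ Cs p := by
  rw [mem_Cs_iff]; simp

lemma Cs_conj {g h : GL2 p} (hg : mono (g : Matrix (Fin 2) (Fin 2) (ZMod p))) (hh : h ∈ Cs p) :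
    g * h * g⁻¹ ∈ Cs p := by
  obtain ⟨e1, e2⟩ := (mem_Cs_iff h).mp hh
  rcases mono_cases hg with ⟨a, d, ha, hd, rfl⟩ | ⟨b, c, hb, hc, rfl⟩ <;>
    refine (mem_Cs_iff _).mpr ⟨?_, ?_⟩ <;>
    · simp only [ent_mul, dU_val, dU_inv_val, aU_val, aU_inv_val, e1, e2]
      simp

lemma mono_inv {g : GL2 p} (hg : mono (g : Matrix (Fin 2) (Fin 2) (ZMod p))) :
    mono ((g⁻¹ : GL2 p) : Matrix (Fin 2) (Fin 2) (ZMod p)) := by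
  rcases mono_cases hg with ⟨a, d, ha, hd, rfl⟩ | ⟨b, c, hb, hc, rfl⟩
  · exact Or.inl ⟨by rw [dU_inv_val]; simp, by rw [dU_inv_val]; simp⟩
  · exact Or.inr ⟨by rw [aU_inv_val]; simp, by rw [aU_inv_val]; simp⟩

lemma mem_Nspl_iff (h2 : (2 : ZMod p) ≠ 0) (g : GL2 p) :
    g ∈ Nspl p ↔ mono (g : Matrix (Fin 2) (Fin 2) (ZMod p)) := by
  constructor
  · intro hg
    have hd0 : ((-1 : ZMod p)) ≠ 0 := neg_ne_zero.mpr one_ne_zero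
    set d₀ : GL2 p := dU 1 (-1) one_ne_zero hd0 with hd₀
    have hk : g * d₀ * g⁻¹ ∈ Cs p := (Subgroup.mem_normalizer_iff.mp hg d₀).mp (dU_mem_Cs _ _ _ _)
    obtain ⟨k1, k2⟩ := (mem_Cs_iff _).mp hk
    set k := g * d₀ * g⁻¹ with hkdef
    have hekg : k * g = g * d₀ := by rw [hkdef]; group
    have E : ∀ i j, (k : Matrix (Fin 2) (Fin 2) (ZMod p)) i 0 *
        (g : Matrix (Fin 2) (Fin 2) (ZMod p)) 0 j
        + (k : Matrix (Fin 2) (Fin 2) (ZMod p)) i 1 * (g : Matrix (Fin 2) (Fin 2) (ZMod p)) 1 j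
        = (g : Matrix (Fin 2) (Fin 2) (ZMod p)) i 0 * (d₀ : Matrix (Fin 2) (Fin 2) (ZMod p)) 0 j
        + (g : Matrix (Fin 2) (Fin 2) (ZMod p)) i 1 *
          (d₀ : Matrix (Fin 2) (Fin 2) (ZMod p)) 1 j := by
      intro i j; rw [← ent_mul, ← ent_mul, hekg]
    have E00 := E 0 0; have E01 := E 0 1; have E10 := E 1 0; have E11 := E 1 1
    rw [hd₀] at E00 E01 E10 E11
    rw [dU_val] at E00 E01 E10 E11
    rw [k1] at E00 E01
    rw [k2] at E10 E11
    norm_num [Matrix.cons_val_zero, Matrix.cons_val_one, Matrix.head_cons] at E00 E01 E10 E11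
    -- E00 : k00 * g00 = g00 ; E01 : k00 * g01 = -g01 ; E10 : k11 * g10 = g10 ; E11 : k11*g11 = -g11
    have claim1 : (g : Matrix (Fin 2) (Fin 2) (ZMod p)) 0 0 ≠ 0 →
        (g : Matrix (Fin 2) (Fin 2) (ZMod p)) 0 1 = 0 := by
      intro h00
      have hk00 : (k : Matrix (Fin 2) (Fin 2) (ZMod p)) 0 0 = 1 := by
        have h' : ((k : Matrix (Fin 2) (Fin 2) (ZMod p)) 0 0 - 1) *
            (g : Matrix (Fin 2) (Fin 2) (ZMod p)) 0 0 = 0 := by linear_combination E00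
        rcases mul_eq_zero.mp h' with h | h
        · exact sub_eq_zero.mp h
        · exact absurd h h00
      rw [hk00, one_mul] at E01
      have h2' : (2 : ZMod p) * (g : Matrix (Fin 2) (Fin 2) (ZMod p)) 0 1 = 0 := by
        linear_combination E01
      rcases mul_eq_zero.mp h2' with h | h
      · exact absurd h h2
      · exact h
    have claim2 : (g : Matrix (Fin 2) (Fin 2) (ZMod p)) 1 0 ≠ 0 →
        (g : Matrix (Fin 2) (Fin 2) (ZMod p)) 1 1 = 0 := by
      intro h10
      have hk11 : (k : Matrix (Fin 2) (Fin 2) (ZMod p)) 1 1 = 1 := by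
        have h' : ((k : Matrix (Fin 2) (Fin 2) (ZMod p)) 1 1 - 1) *
            (g : Matrix (Fin 2) (Fin 2) (ZMod p)) 1 0 = 0 := by linear_combination E10
        rcases mul_eq_zero.mp h' with h | h
        · exact sub_eq_zero.mp h
        · exact absurd h h10
      rw [hk11, one_mul] at E11
      have h2' : (2 : ZMod p) * (g : Matrix (Fin 2) (Fin 2) (ZMod p)) 1 1 = 0 := by
        linear_combination E11
      rcases mul_eq_zero.mp h2' with h | h
      · exact absurd h h2
      · exact h
    have hdet := det_ne g
    by_cases h00 : (g : Matrix (Fin 2) (Fin 2) (ZMod p)) 0 0 = 0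
    · right
      refine ⟨h00, ?_⟩
      by_cases h10 : (g : Matrix (Fin 2) (Fin 2) (ZMod p)) 1 0 = 0
      · exfalso; apply hdet; rw [h00, h10]; ring
      · exact claim2 h10
    · left
      refine ⟨claim1 h00, ?_⟩
      by_contra h10
      have h11 := claim2 h10
      apply hdet
      rw [claim1 h00, h11]; ring
  · intro hm
    rw [Nspl, Subgroup.mem_normalizer_iff]
    intro h
    constructor
    · exact fun hh => Cs_conj hm hh
    · intro hh
      have := Cs_conj (mono_inv hm) hh
      rw [inv_inv] at this
      have heq : g⁻¹ * (g * h * g⁻¹) * g = h := by group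
      rwa [heq] at this

variable (h2 : (2 : ZMod p) ≠ 0)

lemma one_fin_two' : (1 : Matrix (Fin 2) (Fin 2) (ZMod p)) = !![1,0;0,1] := one_fin_two

def gam (h2 : (2 : ZMod p) ≠ 0) : GL2 p :=
  mkU !![1,1;1,-1] !![2⁻¹,2⁻¹;2⁻¹,-2⁻¹]
    (by rw [Matrix.mul_fin_two, one_fin_two']
        have h : (2⁻¹ : ZMod p) + 2⁻¹ = 1 := by field_simp; ring
        refine M2ext ?_ ?_ ?_ ?_
        · linear_combination h
        · ring
        · ring
        · linear_combination h)
    (by rw [Matrix.mul_fin_two, one_fin_two']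
        have h : (2⁻¹ : ZMod p) + 2⁻¹ = 1 := by field_simp; ring
        refine M2ext ?_ ?_ ?_ ?_
        · linear_combination h
        · ring
        · ring
        · linear_combination h)

@[simp] lemma gam_val : ((gam h2 : GL2 p) : Matrix (Fin 2) (Fin 2) (ZMod p)) = !![1,1;1,-1] := rfl
@[simp] lemma gam_inv_val :
    (((gam h2)⁻¹ : GL2 p) : Matrix (Fin 2) (Fin 2) (ZMod p)) = !![2⁻¹,2⁻¹;2⁻¹,-2⁻¹] := rfl

lemma mem_Cgen_iff (u : ZMod p) (g : GL2 p) : g ∈ Cgen p u ↔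
    (g : Matrix (Fin 2) (Fin 2) (ZMod p)) 0 0 = (g : Matrix (Fin 2) (Fin 2) (ZMod p)) 1 1 ∧
    (g : Matrix (Fin 2) (Fin 2) (ZMod p)) 0 1 = u * (g : Matrix (Fin 2) (Fin 2) (ZMod p)) 1 0 :=
  Iff.rfl

lemma conj_val (g : GL2 p) :
    (((gam h2)⁻¹ * g * gam h2 : GL2 p) : Matrix (Fin 2) (Fin 2) (ZMod p)) =
    !![2⁻¹ * (g : Matrix (Fin 2) (Fin 2) (ZMod p)) 0 0 + 2⁻¹ * (g : Matrix (Fin 2) (Fin 2) (ZMod p)) 1 0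
        + (2⁻¹ * (g : Matrix (Fin 2) (Fin 2) (ZMod p)) 0 1 + 2⁻¹ * (g : Matrix (Fin 2) (Fin 2) (ZMod p)) 1 1),
      2⁻¹ * (g : Matrix (Fin 2) (Fin 2) (ZMod p)) 0 0 + 2⁻¹ * (g : Matrix (Fin 2) (Fin 2) (ZMod p)) 1 0
        - (2⁻¹ * (g : Matrix (Fin 2) (Fin 2) (ZMod p)) 0 1 + 2⁻¹ * (g : Matrix (Fin 2) (Fin 2) (ZMod p)) 1 1) ;
      2⁻¹ * (g : Matrix (Fin 2) (Fin 2) (ZMod p)) 0 0 - 2⁻¹ * (g : Matrix (Fin 2) (Fin 2) (ZMod p)) 1 0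
        + (2⁻¹ * (g : Matrix (Fin 2) (Fin 2) (ZMod p)) 0 1 - 2⁻¹ * (g : Matrix (Fin 2) (Fin 2) (ZMod p)) 1 1),
      2⁻¹ * (g : Matrix (Fin 2) (Fin 2) (ZMod p)) 0 0 - 2⁻¹ * (g : Matrix (Fin 2) (Fin 2) (ZMod p)) 1 0
        - (2⁻¹ * (g : Matrix (Fin 2) (Fin 2) (ZMod p)) 0 1 - 2⁻¹ * (g : Matrix (Fin 2) (Fin 2) (ZMod p)) 1 1)] := by
  conv_lhs => rw [Units.val_mul, Units.val_mul, gam_inv_val, gam_val,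
    Matrix.eta_fin_two (g : Matrix (Fin 2) (Fin 2) (ZMod p)), Matrix.mul_fin_two,
    Matrix.mul_fin_two]
  refine M2ext ?_ ?_ ?_ ?_ <;> simp <;> ring

lemma Cgen1_conj_iff (h : GL2 p) :
    h ∈ Cgen p 1 ↔ (gam h2)⁻¹ * h * gam h2 ∈ Cs p := by
  have hk : (2 : ZMod p) * 2⁻¹ = 1 := mul_inv_cancel₀ h2
  constructor
  · rintro ⟨c1, c2⟩
    rw [one_mul] at c2
    refine (mem_Cs_iff _).mpr ⟨?_, ?_⟩ <;> simp only [conj_val h2, m01, m10]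
    · linear_combination (2⁻¹ : ZMod p) * c1 - 2⁻¹ * c2
    · linear_combination (2⁻¹ : ZMod p) * c1 + 2⁻¹ * c2
  · intro hW
    obtain ⟨w1, w2⟩ := (mem_Cs_iff _).mp hW
    simp only [conj_val h2, m01, m10] at w1 w2
    refine (mem_Cgen_iff 1 h).mpr ⟨?_, ?_⟩
    · linear_combination w1 + w2 - ((h : Matrix (Fin 2) (Fin 2) (ZMod p)) 0 0
        - (h : Matrix (Fin 2) (Fin 2) (ZMod p)) 1 1) * hk
    · rw [one_mul]
      linear_combination -w1 + w2 - ((h : Matrix (Fin 2) (Fin 2) (ZMod p)) 0 1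
        - (h : Matrix (Fin 2) (Fin 2) (ZMod p)) 1 0) * hk

lemma mem_Nspl'_iff (g : GL2 p) :
    g ∈ Nspl' p ↔ (gam h2)⁻¹ * g * gam h2 ∈ Nspl p := by
  set γ := gam h2 with hγ
  rw [Nspl', Subgroup.mem_normalizer_iff, Nspl, Subgroup.mem_normalizer_iff]
  constructor
  · intro H h
    constructor
    · intro hh
      have h1 : γ * h * γ⁻¹ ∈ Cgen p 1 := by
        rw [Cgen1_conj_iff h2]
        have e : γ⁻¹ * (γ * h * γ⁻¹) * γ = h := by group
        rw [hγ] at e ⊢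
        rw [e]; exact hh
      have h3 := (H _).mp h1
      have h4 := (Cgen1_conj_iff h2 _).mp h3
      have e : γ⁻¹ * (g * (γ * h * γ⁻¹) * g⁻¹) * γ = (γ⁻¹*g*γ) * h * (γ⁻¹*g*γ)⁻¹ := by group
      rw [hγ] at e
      rwa [e] at h4
    · intro hh
      have h1 : g * (γ * h * γ⁻¹) * g⁻¹ ∈ Cgen p 1 := by
        rw [Cgen1_conj_iff h2]
        have e : γ⁻¹ * (g * (γ * h * γ⁻¹) * g⁻¹) * γ = (γ⁻¹*g*γ) * h * (γ⁻¹*g*γ)⁻¹ := by group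
        rw [hγ] at e
        rw [e]; exact hh
      have h3 := (H _).mpr h1
      have h4 := (Cgen1_conj_iff h2 _).mp h3
      have e : γ⁻¹ * (γ * h * γ⁻¹) * γ = h := by group
      rw [hγ] at e
      rwa [e] at h4
  · intro H h
    constructor
    · intro hh
      rw [Cgen1_conj_iff h2] at hh ⊢
      have e : γ⁻¹ * (g*h*g⁻¹) * γ = (γ⁻¹*g*γ) * (γ⁻¹*h*γ) * (γ⁻¹*g*γ)⁻¹ := by group
      rw [hγ] at e
      rw [e]
      exact (H _).mp hh
    · intro hh
      rw [Cgen1_conj_iff h2] at hh ⊢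
      have e : γ⁻¹ * (g*h*g⁻¹) * γ = (γ⁻¹*g*γ) * (γ⁻¹*h*γ) * (γ⁻¹*g*γ)⁻¹ := by group
      rw [hγ] at e
      rw [e] at hh
      exact (H _).mpr hh

lemma mem_Nspl'_iff_ex (g : GL2 p) :
    g ∈ Nspl' p ↔ ∃ n ∈ Nspl p, g = gam h2 * n * (gam h2)⁻¹ := by
  rw [mem_Nspl'_iff h2]
  constructor
  · intro h
    exact ⟨_, h, by group⟩
  · rintro ⟨n, hn, rfl⟩
    have e : (gam h2)⁻¹ * (gam h2 * n * (gam h2)⁻¹) * gam h2 = n := by group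
    rw [e]; exact hn

lemma scalar_mem_Nspl' (s : ZMod p) (hs : s ≠ 0) : dU s s hs hs ∈ Nspl' p :=
  Subgroup.le_normalizer ((mem_Cgen_iff 1 _).mpr ⟨by simp, by simp⟩)

lemma wU_mem_Nspl' : aU 1 1 one_ne_zero one_ne_zero ∈ Nspl' p :=
  Subgroup.le_normalizer ((mem_Cgen_iff 1 _).mpr ⟨by simp, by simp⟩)

include h2 in
lemma wU_mem_Nspl : aU 1 1 one_ne_zero one_ne_zero ∈ Nspl p := by
  rw [mem_Nspl_iff h2]
  exact Or.inr ⟨by simp, by simp⟩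

include h2 in
lemma dU_mem_Nspl (a d : ZMod p) (ha : a ≠ 0) (hd : d ≠ 0) : dU a d ha hd ∈ Nspl p := by
  rw [mem_Nspl_iff h2]
  exact Or.inl ⟨by simp, by simp⟩

include h2 in
lemma aU_mem_Nspl (b c : ZMod p) (hb : b ≠ 0) (hc : c ≠ 0) : aU b c hb hc ∈ Nspl p := by
  rw [mem_Nspl_iff h2]
  exact Or.inr ⟨by simp, by simp⟩

include h2 in
lemma diag_mem_Nspl'_iff (β : ZMod p) (hβ : β ≠ 0) :
    dU 1 β one_ne_zero hβ ∈ Nspl' p ↔ β = 1 ∨ β = -1 := by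
  rw [mem_Nspl'_iff h2, mem_Nspl_iff h2]
  have h2i : (2⁻¹ : ZMod p) ≠ 0 := inv_ne_zero h2
  constructor
  · intro hm
    rcases hm with ⟨e1, _⟩ | ⟨e1, _⟩
    · left
      rw [conj_val h2] at e1
      simp only [dU_val, m00, m01, m10, m11] at e1
      have : (2⁻¹ : ZMod p) * (1 - β) = 0 := by linear_combination e1
      rcases mul_eq_zero.mp this with h | h
      · exact absurd h h2i
      · linear_combination -h
    · right
      rw [conj_val h2] at e1
      simp only [dU_val, m00, m01, m10, m11] at e1
      have : (2⁻¹ : ZMod p) * (1 + β) = 0 := by linear_combination e1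
      rcases mul_eq_zero.mp this with h | h
      · exact absurd h h2i
      · linear_combination h
  · intro hm
    rcases hm with rfl | rfl
    · left
      constructor <;>
      · rw [conj_val h2]
        simp only [dU_val, m00, m01, m10, m11]
        ring
    · right
      constructor <;>
      · rw [conj_val h2]
        simp only [dU_val, m00, m01, m10, m11]
        ring

def allNZ (m : Matrix (Fin 2) (Fin 2) (ZMod p)) : Prop :=
  m 0 0 ≠ 0 ∧ m 0 1 ≠ 0 ∧ m 1 0 ≠ 0 ∧ m 1 1 ≠ 0

def PC (t : ZMod p) (m : Matrix (Fin 2) (Fin 2) (ZMod p)) : Prop :=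
  m 0 0 * m 1 1 = t * (m 0 1 * m 1 0) ∨ t * (m 0 0 * m 1 1) = m 0 1 * m 1 0

def sig (t : ZMod p) (ht : t ≠ 1) : GL2 p :=
  mkU !![1,1;1,t] !![t*(t-1)⁻¹, -(t-1)⁻¹; -(t-1)⁻¹, (t-1)⁻¹]
    (by have h : t - 1 ≠ 0 := sub_ne_zero.mpr ht
        rw [Matrix.mul_fin_two, one_fin_two']
        refine M2ext ?_ ?_ ?_ ?_ <;> field_simp <;> ring)
    (by have h : t - 1 ≠ 0 := sub_ne_zero.mpr ht
        rw [Matrix.mul_fin_two, one_fin_two']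
        refine M2ext ?_ ?_ ?_ ?_ <;> field_simp <;> ring)

@[simp] lemma sig_val (t : ZMod p) (ht : t ≠ 1) :
    ((sig t ht : GL2 p) : Matrix (Fin 2) (Fin 2) (ZMod p)) = !![1,1;1,t] := rfl

lemma dosetN_iff (t : ZMod p) (ht : t ≠ 1) (g : GL2 p) :
    g ∈ dosetN p t ↔ ∃ a ∈ Nspl p, ∃ b ∈ Nspl p, g = a * sig t ht * b := by
  constructor
  · rintro ⟨a, ha, b, hb, hv⟩
    have : a⁻¹ * g * b⁻¹ = sig t ht := Units.ext (by rw [hv, sig_val])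
    refine ⟨a, ha, b, hb, ?_⟩
    rw [← this]
    group
  · rintro ⟨a, ha, b, hb, rfl⟩
    refine ⟨a, ha, b, hb, ?_⟩
    have : a⁻¹ * (a * sig t ht * b) * b⁻¹ = sig t ht := by group
    rw [this, sig_val]

-- explicit products
lemma left_dU_val (a d : ZMod p) (ha hd) (g : GL2 p) :
    ((dU a d ha hd * g : GL2 p) : Matrix (Fin 2) (Fin 2) (ZMod p)) =
    !![a * (g : Matrix (Fin 2) (Fin 2) (ZMod p)) 0 0, a * (g : Matrix (Fin 2) (Fin 2) (ZMod p)) 0 1;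
       d * (g : Matrix (Fin 2) (Fin 2) (ZMod p)) 1 0, d * (g : Matrix (Fin 2) (Fin 2) (ZMod p)) 1 1] := by
  conv_lhs => rw [Units.val_mul, dU_val, Matrix.eta_fin_two (g : Matrix (Fin 2) (Fin 2) (ZMod p)),
    Matrix.mul_fin_two]
  refine M2ext ?_ ?_ ?_ ?_ <;> ring

lemma left_aU_val (b c : ZMod p) (hb hc) (g : GL2 p) :
    ((aU b c hb hc * g : GL2 p) : Matrix (Fin 2) (Fin 2) (ZMod p)) =
    !![b * (g : Matrix (Fin 2) (Fin 2) (ZMod p)) 1 0, b * (g : Matrix (Fin 2) (Fin 2) (ZMod p)) 1 1;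
       c * (g : Matrix (Fin 2) (Fin 2) (ZMod p)) 0 0, c * (g : Matrix (Fin 2) (Fin 2) (ZMod p)) 0 1] := by
  conv_lhs => rw [Units.val_mul, aU_val, Matrix.eta_fin_two (g : Matrix (Fin 2) (Fin 2) (ZMod p)),
    Matrix.mul_fin_two]
  refine M2ext ?_ ?_ ?_ ?_ <;> ring

lemma right_dU_val (a d : ZMod p) (ha hd) (g : GL2 p) :
    ((g * dU a d ha hd : GL2 p) : Matrix (Fin 2) (Fin 2) (ZMod p)) =
    !![a * (g : Matrix (Fin 2) (Fin 2) (ZMod p)) 0 0, d * (g : Matrix (Fin 2) (Fin 2) (ZMod p)) 0 1;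
       a * (g : Matrix (Fin 2) (Fin 2) (ZMod p)) 1 0, d * (g : Matrix (Fin 2) (Fin 2) (ZMod p)) 1 1] := by
  conv_lhs => rw [Units.val_mul, dU_val, Matrix.eta_fin_two (g : Matrix (Fin 2) (Fin 2) (ZMod p)),
    Matrix.mul_fin_two]
  refine M2ext ?_ ?_ ?_ ?_ <;> ring

lemma right_aU_val (b c : ZMod p) (hb hc) (g : GL2 p) :
    ((g * aU b c hb hc : GL2 p) : Matrix (Fin 2) (Fin 2) (ZMod p)) =
    !![c * (g : Matrix (Fin 2) (Fin 2) (ZMod p)) 0 1, b * (g : Matrix (Fin 2) (Fin 2) (ZMod p)) 0 0;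
       c * (g : Matrix (Fin 2) (Fin 2) (ZMod p)) 1 1, b * (g : Matrix (Fin 2) (Fin 2) (ZMod p)) 1 0] := by
  conv_lhs => rw [Units.val_mul, aU_val, Matrix.eta_fin_two (g : Matrix (Fin 2) (Fin 2) (ZMod p)),
    Matrix.mul_fin_two]
  refine M2ext ?_ ?_ ?_ ?_ <;> ring

include h2 in
lemma close_left (t : ZMod p) {n g : GL2 p} (hn : n ∈ Nspl p)
    (h : allNZ (g : Matrix (Fin 2) (Fin 2) (ZMod p)) ∧ PC t (g : Matrix (Fin 2) (Fin 2) (ZMod p))) :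
    allNZ ((n * g : GL2 p) : Matrix (Fin 2) (Fin 2) (ZMod p)) ∧
      PC t ((n * g : GL2 p) : Matrix (Fin 2) (Fin 2) (ZMod p)) := by
  obtain ⟨⟨z1, z2, z3, z4⟩, hpc⟩ := h
  rcases mono_cases ((mem_Nspl_iff h2 n).mp hn) with ⟨a, d, ha, hd, rfl⟩ | ⟨b, c, hb, hc, rfl⟩
  · rw [left_dU_val]
    refine ⟨⟨by simp [mul_ne_zero, ha, z1], by simp [mul_ne_zero, ha, z2],
      by simp [mul_ne_zero, hd, z3], by simp [mul_ne_zero, hd, z4]⟩, ?_⟩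
    rcases hpc with hp | hp
    · exact Or.inl (by simp only [m00, m01, m10, m11]; linear_combination a*d*hp)
    · exact Or.inr (by simp only [m00, m01, m10, m11]; linear_combination a*d*hp)
  · rw [left_aU_val]
    refine ⟨⟨by simp [mul_ne_zero, hb, z3], by simp [mul_ne_zero, hb, z4],
      by simp [mul_ne_zero, hc, z1], by simp [mul_ne_zero, hc, z2]⟩, ?_⟩
    rcases hpc with hp | hp
    · exact Or.inr (by simp only [m00, m01, m10, m11]; linear_combination -(b*c)*hp)
    · exact Or.inl (by simp only [m00, m01, m10, m11]; linear_combination -(b*c)*hp)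

include h2 in
lemma close_right (t : ZMod p) {n g : GL2 p} (hn : n ∈ Nspl p)
    (h : allNZ (g : Matrix (Fin 2) (Fin 2) (ZMod p)) ∧ PC t (g : Matrix (Fin 2) (Fin 2) (ZMod p))) :
    allNZ ((g * n : GL2 p) : Matrix (Fin 2) (Fin 2) (ZMod p)) ∧
      PC t ((g * n : GL2 p) : Matrix (Fin 2) (Fin 2) (ZMod p)) := by
  obtain ⟨⟨z1, z2, z3, z4⟩, hpc⟩ := h
  rcases mono_cases ((mem_Nspl_iff h2 n).mp hn) with ⟨a, d, ha, hd, rfl⟩ | ⟨b, c, hb, hc, rfl⟩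
  · rw [right_dU_val]
    refine ⟨⟨by simp [mul_ne_zero, ha, z1], by simp [mul_ne_zero, hd, z2],
      by simp [mul_ne_zero, ha, z3], by simp [mul_ne_zero, hd, z4]⟩, ?_⟩
    rcases hpc with hp | hp
    · exact Or.inl (by simp only [m00, m01, m10, m11]; linear_combination a*d*hp)
    · exact Or.inr (by simp only [m00, m01, m10, m11]; linear_combination a*d*hp)
  · rw [right_aU_val]
    refine ⟨⟨by simp [mul_ne_zero, hc, z2], by simp [mul_ne_zero, hb, z1],
      by simp [mul_ne_zero, hc, z4], by simp [mul_ne_zero, hb, z3]⟩, ?_⟩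
    rcases hpc with hp | hp
    · exact Or.inr (by simp only [m00, m01, m10, m11]; linear_combination -(b*c)*hp)
    · exact Or.inl (by simp only [m00, m01, m10, m11]; linear_combination -(b*c)*hp)

include h2 in
theorem dosetN_char (t : ZMod p) (ht0 : t ≠ 0) (ht1 : t ≠ 1) (g : GL2 p) :
    g ∈ dosetN p t ↔ allNZ (g : Matrix (Fin 2) (Fin 2) (ZMod p)) ∧
      PC t (g : Matrix (Fin 2) (Fin 2) (ZMod p)) := by
  rw [dosetN_iff t ht1]
  constructor
  · rintro ⟨a, ha, b, hb, rfl⟩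
    have hσ : allNZ ((sig t ht1 : GL2 p) : Matrix (Fin 2) (Fin 2) (ZMod p)) ∧
        PC t ((sig t ht1 : GL2 p) : Matrix (Fin 2) (Fin 2) (ZMod p)) := by
      rw [sig_val]
      exact ⟨⟨by simp, by simp, by simp, by simp [ht0]⟩,
        Or.inl (by simp only [m00, m01, m10, m11]; ring)⟩
    exact close_right h2 t hb (close_left h2 t ha hσ)
  · rintro ⟨⟨z1, z2, z3, z4⟩, hpc⟩
    -- helper: the first-disjunct case
    have main : ∀ h : GL2 p,
        (h : Matrix (Fin 2) (Fin 2) (ZMod p)) 0 0 ≠ 0 →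
        (h : Matrix (Fin 2) (Fin 2) (ZMod p)) 0 1 ≠ 0 →
        (h : Matrix (Fin 2) (Fin 2) (ZMod p)) 1 0 ≠ 0 →
        (h : Matrix (Fin 2) (Fin 2) (ZMod p)) 0 0 * (h : Matrix (Fin 2) (Fin 2) (ZMod p)) 1 1 =
          t * ((h : Matrix (Fin 2) (Fin 2) (ZMod p)) 0 1 * (h : Matrix (Fin 2) (Fin 2) (ZMod p)) 1 0) →
        ∃ a ∈ Nspl p, ∃ b ∈ Nspl p, h = a * sig t ht1 * b := by
      intro h w1 w2 w3 hp
      have hu : (h : Matrix (Fin 2) (Fin 2) (ZMod p)) 0 1 *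
          ((h : Matrix (Fin 2) (Fin 2) (ZMod p)) 0 0)⁻¹ ≠ 0 :=
        mul_ne_zero w2 (inv_ne_zero w1)
      refine ⟨dU _ _ w1 w3, dU_mem_Nspl h2 _ _ _ _, dU 1 _ one_ne_zero hu,
        dU_mem_Nspl h2 _ _ _ _, Units.ext ?_⟩
      rw [Units.val_mul, Units.val_mul, dU_val, dU_val, sig_val, Matrix.mul_fin_two,
        Matrix.mul_fin_two, Matrix.eta_fin_two (h : Matrix (Fin 2) (Fin 2) (ZMod p))]
      refine M2ext ?_ ?_ ?_ ?_ <;> simp <;> field_simp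
      linear_combination hp
    rcases hpc with hp | hp
    · exact main g z1 z2 z3 hp
    · obtain ⟨a, ha, b, hb, he⟩ := main (aU 1 1 one_ne_zero one_ne_zero * g)
        (by rw [left_aU_val]; simpa using z3) (by rw [left_aU_val]; simpa using z4)
        (by rw [left_aU_val]; simpa using z1)
        (by rw [left_aU_val]; simp only [m00, m01, m10, m11]; linear_combination -hp)
      refine ⟨(aU 1 1 one_ne_zero one_ne_zero)⁻¹ * a, ?_, b, hb, ?_⟩
      · exact Subgroup.mul_mem _ (Subgroup.inv_mem _ (aU_mem_Nspl h2 _ _ _ _)) ha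
      · rw [show g = (aU 1 1 one_ne_zero one_ne_zero)⁻¹ * (aU 1 1 one_ne_zero one_ne_zero * g) by group, he]
        group

include h2 in
lemma neg_one_ne_one' : (-1 : ZMod p) ≠ 1 := fun h => h2 (by linear_combination -h)

lemma sig_neg_one_eq_gam : sig (-1 : ZMod p) (neg_one_ne_one' h2) = gam h2 :=
  Units.ext (by rw [sig_val, gam_val])

lemma dosetN_neg_one_iff (g : GL2 p) :
    g ∈ dosetN p (-1) ↔ ∃ a ∈ Nspl p, ∃ b ∈ Nspl p, g = a * gam h2 * b := by
  rw [dosetN_iff (-1) (neg_one_ne_one' h2) g]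
  constructor
  · rintro ⟨a, ha, b, hb, rfl⟩
    exact ⟨a, ha, b, hb, by rw [sig_neg_one_eq_gam h2]⟩
  · rintro ⟨a, ha, b, hb, rfl⟩
    exact ⟨a, ha, b, hb, by rw [sig_neg_one_eq_gam h2]⟩

def twoU (h2 : (2 : ZMod p) ≠ 0) : GL2 p := dU 2 2 h2 h2

include h2 in
lemma gam_sq : gam h2 * gam h2 = twoU h2 := by
  refine Units.ext ?_
  rw [Units.val_mul, gam_val, twoU, dU_val, Matrix.mul_fin_two]
  refine M2ext ?_ ?_ ?_ ?_ <;> ring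

include h2 in
lemma S1_char (z : GL2 p) :
    z ∈ ((Nspl p : Set (GL2 p)) * (Nspl' p : Set (GL2 p))) ↔
      z * gam h2 ∈ dosetN p (-1) := by
  rw [dosetN_neg_one_iff h2]
  constructor
  · intro hz
    obtain ⟨n, hn, m, hm, rfl⟩ := Set.mem_mul.mp hz
    obtain ⟨n₂, hn₂, rfl⟩ := (mem_Nspl'_iff_ex h2 m).mp hm
    exact ⟨n, hn, n₂, hn₂, by group⟩
  · rintro ⟨a, ha, b, hb, he⟩
    have hz : z = (z * gam h2) * (gam h2)⁻¹ := by group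
    rw [he] at hz
    refine Set.mem_mul.mpr ⟨a, ha, gam h2 * b * (gam h2)⁻¹,
      (mem_Nspl'_iff_ex h2 _).mpr ⟨b, hb, rfl⟩, ?_⟩
    rw [hz]; group

include h2 in
lemma S2_char (z : GL2 p) :
    z ∈ ((Nspl' p : Set (GL2 p)) * (Nspl p : Set (GL2 p))) ↔
      gam h2 * z ∈ dosetN p (-1) := by
  rw [dosetN_neg_one_iff h2]
  constructor
  · intro hz
    obtain ⟨m, hm, n, hn, rfl⟩ := Set.mem_mul.mp hz
    obtain ⟨n₂, hn₂, rfl⟩ := (mem_Nspl'_iff_ex h2 m).mp hm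
    refine ⟨gam h2 * gam h2 * n₂ * (gam h2 * gam h2)⁻¹, ?_, n, hn, by group⟩
    rw [gam_sq h2]
    exact Subgroup.mul_mem _ (Subgroup.mul_mem _ (dU_mem_Nspl h2 2 2 h2 h2) hn₂)
      (Subgroup.inv_mem _ (dU_mem_Nspl h2 2 2 h2 h2))
  · rintro ⟨a, ha, b, hb, he⟩
    refine Set.mem_mul.mpr ⟨(gam h2)⁻¹ * a * gam h2, ?_, b, hb, ?_⟩
    · show (gam h2)⁻¹ * a * gam h2 ∈ Nspl' p
      rw [mem_Nspl'_iff h2]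
      have e : (gam h2)⁻¹ * ((gam h2)⁻¹ * a * gam h2) * gam h2
          = (gam h2 * gam h2)⁻¹ * a * (gam h2 * gam h2) := by group
      rw [e, gam_sq h2]
      exact Subgroup.mul_mem _ (Subgroup.mul_mem _
        (Subgroup.inv_mem _ (dU_mem_Nspl h2 2 2 h2 h2)) ha) (dU_mem_Nspl h2 2 2 h2 h2)
    · have hz : z = (gam h2)⁻¹ * (gam h2 * z) := by group
      rw [he] at hz
      rw [hz]; group

lemma mem_mk_image {G : Type*} [Group G] {K : Subgroup G} {S : Set G}
    (hS : ∀ s ∈ S, ∀ k ∈ K, s * k ∈ S) (x : G) (c : G ⧸ K) :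
    c ∈ QuotientGroup.mk '' (x • S) ↔ x⁻¹ * Quotient.out c ∈ S := by
  constructor
  · rintro ⟨g, hg, hgc⟩
    obtain ⟨s, hs, rfl⟩ := hg
    have h1 : (QuotientGroup.mk (x • s) : G ⧸ K) = QuotientGroup.mk (Quotient.out c) := by
      rw [hgc, QuotientGroup.out_eq']
    have hk : (x • s)⁻¹ * Quotient.out c ∈ K := QuotientGroup.eq.mp h1
    have he : x⁻¹ * Quotient.out c = s * ((x * s)⁻¹ * Quotient.out c) := by group
    rw [smul_eq_mul] at hk
    rw [he]
    exact hS s hs _ hk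
  · intro h
    refine ⟨x * (x⁻¹ * Quotient.out c), ?_, ?_⟩
    · rw [show x * (x⁻¹ * Quotient.out c) = x • (x⁻¹ * Quotient.out c) from rfl]
      exact Set.smul_mem_smul_set h
    · rw [show x * (x⁻¹ * Quotient.out c) = Quotient.out c by group]
      exact QuotientGroup.out_eq' c

omit [Fact p.Prime] in
lemma S1_rinv : ∀ s ∈ ((Nspl p : Set (GL2 p)) * (Nspl' p : Set (GL2 p))),
    ∀ k ∈ Nspl' p, s * k ∈ ((Nspl p : Set (GL2 p)) * (Nspl' p : Set (GL2 p))) := by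
  rintro s hs k hk
  obtain ⟨n, hn, m, hm, rfl⟩ := Set.mem_mul.mp hs
  exact Set.mem_mul.mpr ⟨n, hn, m * k, Subgroup.mul_mem _ hm hk, by group⟩

omit [Fact p.Prime] in
lemma S2_rinv : ∀ s ∈ ((Nspl' p : Set (GL2 p)) * (Nspl p : Set (GL2 p))),
    ∀ k ∈ Nspl p, s * k ∈ ((Nspl' p : Set (GL2 p)) * (Nspl p : Set (GL2 p))) := by
  rintro s hs k hk
  obtain ⟨n, hn, m, hm, rfl⟩ := Set.mem_mul.mp hs
  exact Set.mem_mul.mpr ⟨n, hn, m * k, Subgroup.mul_mem _ hm hk, by group⟩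

omit [Fact p.Prime] in
lemma S2_linv {z k : GL2 p} (hk : k ∈ Nspl' p)
    (hz : z ∈ ((Nspl' p : Set (GL2 p)) * (Nspl p : Set (GL2 p)))) :
    k * z ∈ ((Nspl' p : Set (GL2 p)) * (Nspl p : Set (GL2 p))) := by
  obtain ⟨n, hn, m, hm, rfl⟩ := Set.mem_mul.mp hz
  exact Set.mem_mul.mpr ⟨k * n, Subgroup.mul_mem _ hk hn, m, hm, by group⟩

omit [Fact p.Prime] in
lemma N_rinv : ∀ s ∈ (Nspl p : Set (GL2 p)), ∀ k ∈ Nspl p, s * k ∈ (Nspl p : Set (GL2 p)) :=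
  fun s hs k hk => Subgroup.mul_mem _ hs hk

lemma dosetN_rinv (t : ZMod p) (ht : t ≠ 1) : ∀ s ∈ dosetN p t, ∀ k ∈ Nspl p,
    s * k ∈ dosetN p t := by
  intro s hs k hk
  rw [dosetN_iff t ht] at hs ⊢
  obtain ⟨a, ha, b, hb, rfl⟩ := hs
  exact ⟨a, ha, b * k, Subgroup.mul_mem _ hb hk, by group⟩

lemma dU_one_mul (β β' : ZMod p) (hβ : β ≠ 0) (hβ' : β' ≠ 0) :
    dU 1 β one_ne_zero hβ * dU 1 β' one_ne_zero hβ' =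
      dU 1 (β * β') one_ne_zero (mul_ne_zero hβ hβ') := by
  refine Units.ext ?_
  rw [Units.val_mul, dU_val, dU_val, dU_val, Matrix.mul_fin_two]
  refine M2ext ?_ ?_ ?_ ?_ <;> ring

lemma dU_one_inv (β : ZMod p) (hβ : β ≠ 0) :
    (dU 1 β one_ne_zero hβ)⁻¹ = dU 1 β⁻¹ one_ne_zero (inv_ne_zero hβ) := by
  refine Units.ext ?_
  rw [dU_inv_val, dU_val, inv_one]

include h2 in
lemma mk_eq_mk_iff (x : GL2 p) (β β' : ZMod p) (hβ : β ≠ 0) (hβ' : β' ≠ 0) :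
    (QuotientGroup.mk (x * dU 1 β one_ne_zero hβ) : GL2 p ⧸ Nspl' p) =
      QuotientGroup.mk (x * dU 1 β' one_ne_zero hβ') ↔ β' = β ∨ β' = -β := by
  rw [QuotientGroup.eq]
  have he : (x * dU 1 β one_ne_zero hβ)⁻¹ * (x * dU 1 β' one_ne_zero hβ') =
      (dU 1 β one_ne_zero hβ)⁻¹ * dU 1 β' one_ne_zero hβ' := by group
  rw [he, dU_one_inv, dU_one_mul]
  rw [diag_mem_Nspl'_iff h2 _ (mul_ne_zero (inv_ne_zero hβ) hβ')]
  constructor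
  · rintro (h | h)
    · left; field_simp at h; exact h
    · right
      have : β' = β * -1 := by
        field_simp at h
        linear_combination h
      rw [this]; ring
  · rintro (rfl | rfl)
    · left; field_simp
    · right; field_simp

lemma left_gam_val (g : GL2 p) :
    ((gam h2 * g : GL2 p) : Matrix (Fin 2) (Fin 2) (ZMod p)) =
    !![(g : Matrix (Fin 2) (Fin 2) (ZMod p)) 0 0 + (g : Matrix (Fin 2) (Fin 2) (ZMod p)) 1 0,
       (g : Matrix (Fin 2) (Fin 2) (ZMod p)) 0 1 + (g : Matrix (Fin 2) (Fin 2) (ZMod p)) 1 1;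
       (g : Matrix (Fin 2) (Fin 2) (ZMod p)) 0 0 - (g : Matrix (Fin 2) (Fin 2) (ZMod p)) 1 0,
       (g : Matrix (Fin 2) (Fin 2) (ZMod p)) 0 1 - (g : Matrix (Fin 2) (Fin 2) (ZMod p)) 1 1] := by
  conv_lhs => rw [Units.val_mul, gam_val, Matrix.eta_fin_two (g : Matrix (Fin 2) (Fin 2) (ZMod p)),
    Matrix.mul_fin_two]
  refine M2ext ?_ ?_ ?_ ?_ <;> ring

lemma PCneg_iff (m : Matrix (Fin 2) (Fin 2) (ZMod p)) :
    PC (-1) m ↔ m 0 0 * m 1 1 + m 0 1 * m 1 0 = 0 := by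
  constructor
  · rintro (h | h)
    · linear_combination h
    · linear_combination -h
  · intro h
    exact Or.inl (by linear_combination h)

include h2 in
lemma algebra_char (b : ZMod p) (hb : b ≠ 0) (u : GL2 p) :
    (allNZ ((gam h2 * ((dU 1 b one_ne_zero hb)⁻¹ * u) : GL2 p) : Matrix (Fin 2) (Fin 2) (ZMod p)) ∧
     PC (-1) ((gam h2 * ((dU 1 b one_ne_zero hb)⁻¹ * u) : GL2 p) : Matrix (Fin 2) (Fin 2) (ZMod p)))
    ↔ (u : Matrix (Fin 2) (Fin 2) (ZMod p)) 0 0 * (u : Matrix (Fin 2) (Fin 2) (ZMod p)) 0 1 * b^2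
      = (u : Matrix (Fin 2) (Fin 2) (ZMod p)) 1 0 * (u : Matrix (Fin 2) (Fin 2) (ZMod p)) 1 1 := by
  set A := (u : Matrix (Fin 2) (Fin 2) (ZMod p)) 0 0 with hA'
  set B := (u : Matrix (Fin 2) (Fin 2) (ZMod p)) 0 1 with hB'
  set C := (u : Matrix (Fin 2) (Fin 2) (ZMod p)) 1 0 with hC'
  set D := (u : Matrix (Fin 2) (Fin 2) (ZMod p)) 1 1 with hD'
  have hdet : A * D - B * C ≠ 0 := det_ne u
  have hbi : b⁻¹ ≠ 0 := inv_ne_zero hb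
  have hbb : b * b⁻¹ = 1 := mul_inv_cancel₀ hb
  have hM : ((gam h2 * ((dU 1 b one_ne_zero hb)⁻¹ * u) : GL2 p) : Matrix (Fin 2) (Fin 2) (ZMod p))
      = !![A + b⁻¹ * C, B + b⁻¹ * D; A - b⁻¹ * C, B - b⁻¹ * D] := by
    rw [dU_one_inv, left_gam_val, left_dU_val]
    simp only [m00, m01, m10, m11]
    refine M2ext ?_ ?_ ?_ ?_ <;> ring
  rw [hM, PCneg_iff]
  simp only [m00, m01, m10, m11]
  constructor
  · rintro ⟨-, hpc⟩
    -- hpc : (A + b⁻¹C)(B - b⁻¹D) + (B + b⁻¹D)(A - b⁻¹C) = 0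
    have h3 : (2 : ZMod p) * (A * B * b^2 - C * D) = 0 := by
      have h4 : b^2 * ((A + b⁻¹ * C) * (B - b⁻¹ * D) + (B + b⁻¹ * D) * (A - b⁻¹ * C)) = 0 := by
        rw [hpc]; ring
      linear_combination h4 + (2 * C * D * b * b⁻¹ + 2*C*D) * (mul_inv_cancel₀ hb)
    rcases mul_eq_zero.mp h3 with h | h
    · exact absurd h h2
    · linear_combination h
  · intro heq
    constructor
    · refine ⟨?_, ?_, ?_, ?_⟩
      · intro hz
        rw [m00] at hz
        have hC0 : C = -(A * b) := by
          have h5 : b * (A + b⁻¹ * C) = 0 := by rw [hz]; ring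
          linear_combination h5 - C * hbb
        by_cases hA0 : A = 0
        · exact hdet (by rw [hA0, hC0, hA0]; ring)
        · have h6 : A * b * (B * b + D) = 0 := by linear_combination heq + D * hC0
          rcases mul_eq_zero.mp h6 with h | h
          · exact (mul_ne_zero hA0 hb) h
          · exact hdet (by rw [hC0, show D = -(B*b) by linear_combination h]; ring)
      · intro hz
        rw [m01] at hz
        have hD0 : D = -(B * b) := by
          have h5 : b * (B + b⁻¹ * D) = 0 := by rw [hz]; ring
          linear_combination h5 - D * hbb
        by_cases hB0 : B = 0
        · exact hdet (by rw [hB0, hD0, hB0]; ring)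
        · have h6 : B * b * (A * b + C) = 0 := by linear_combination heq + C * hD0
          rcases mul_eq_zero.mp h6 with h | h
          · exact (mul_ne_zero hB0 hb) h
          · exact hdet (by rw [hD0, show C = -(A*b) by linear_combination h]; ring)
      · intro hz
        rw [m10] at hz
        have hC0 : C = A * b := by
          have h5 : b * (A - b⁻¹ * C) = 0 := by rw [hz]; ring
          linear_combination -h5 - C * hbb
        by_cases hA0 : A = 0
        · exact hdet (by rw [hA0, hC0, hA0]; ring)
        · have h6 : A * b * (B * b - D) = 0 := by linear_combination heq + D * hC0
          rcases mul_eq_zero.mp h6 with h | h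
          · exact (mul_ne_zero hA0 hb) h
          · exact hdet (by rw [hC0, show D = B*b by linear_combination -h]; ring)
      · intro hz
        rw [m11] at hz
        have hD0 : D = B * b := by
          have h5 : b * (B - b⁻¹ * D) = 0 := by rw [hz]; ring
          linear_combination -h5 - D * hbb
        by_cases hB0 : B = 0
        · exact hdet (by rw [hB0, hD0, hB0]; ring)
        · have h6 : B * b * (A * b - C) = 0 := by linear_combination heq + C * hD0
          rcases mul_eq_zero.mp h6 with h | h
          · exact (mul_ne_zero hB0 hb) h
          · exact hdet (by rw [hD0, show C = A*b by linear_combination -h]; ring)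
    · -- (A + b⁻¹C)(B − b⁻¹D) + (B + b⁻¹D)(A − b⁻¹C) = 0 given ABb² = CD
      have h7 : b^2 * ((A + b⁻¹ * C) * (B - b⁻¹ * D) + (B + b⁻¹ * D) * (A - b⁻¹ * C))
          = 2 * (A * B * b^2 - C * D) - (2 * C * D * b * b⁻¹ + 2*C*D) * (b * b⁻¹ - 1) := by
        ring
      have h8 : b^2 * ((A + b⁻¹ * C) * (B - b⁻¹ * D) + (B + b⁻¹ * D) * (A - b⁻¹ * C)) = 0 := by
        rw [h7, heq, hbb]; ring
      have h9 := mul_eq_zero.mp h8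
      rcases h9 with h | h
      · exact absurd h (pow_ne_zero 2 hb)
      · exact h

set_option synthInstance.maxHeartbeats 1000000
set_option maxHeartbeats 1600000

abbrev fmap (x : GL2 p) (b : (ZMod p)ˣ) : GL2 p ⧸ Nspl' p :=
  QuotientGroup.mk (x * dU 1 (b : ZMod p) one_ne_zero b.ne_zero)

include h2 in
lemma cond2_of_mk (x : GL2 p) (c : GL2 p ⧸ Nspl p) (β : ZMod p) (hβ : β ≠ 0)
    (e : GL2 p ⧸ Nspl' p) (he : e = QuotientGroup.mk (x * dU 1 β one_ne_zero hβ)) :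
    ((Quotient.out e)⁻¹ * Quotient.out c ∈ ((Nspl' p : Set (GL2 p)) * (Nspl p : Set (GL2 p))))
    ↔ ((x⁻¹ * Quotient.out c : GL2 p) : Matrix (Fin 2) (Fin 2) (ZMod p)) 0 0 *
        ((x⁻¹ * Quotient.out c : GL2 p) : Matrix (Fin 2) (Fin 2) (ZMod p)) 0 1 * β^2 =
      ((x⁻¹ * Quotient.out c : GL2 p) : Matrix (Fin 2) (Fin 2) (ZMod p)) 1 0 *
        ((x⁻¹ * Quotient.out c : GL2 p) : Matrix (Fin 2) (Fin 2) (ZMod p)) 1 1 := by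
  have hk : (x * dU 1 β one_ne_zero hβ)⁻¹ * Quotient.out e ∈ Nspl' p :=
    QuotientGroup.eq.mp (by rw [QuotientGroup.out_eq', ← he])
  have hdecomp : (Quotient.out e)⁻¹ * Quotient.out c =
      ((x * dU 1 β one_ne_zero hβ)⁻¹ * Quotient.out e)⁻¹ *
        ((dU 1 β one_ne_zero hβ)⁻¹ * (x⁻¹ * Quotient.out c)) := by group
  rw [hdecomp]
  have step1 : ∀ z : GL2 p,
      (((x * dU 1 β one_ne_zero hβ)⁻¹ * Quotient.out e)⁻¹ * z ∈
        ((Nspl' p : Set (GL2 p)) * (Nspl p : Set (GL2 p)))) ↔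
      z ∈ ((Nspl' p : Set (GL2 p)) * (Nspl p : Set (GL2 p))) := by
    intro z
    constructor
    · intro h
      have := S2_linv hk h
      rwa [mul_inv_cancel_left] at this
    · exact fun h => S2_linv (Subgroup.inv_mem _ hk) h
  rw [step1, S2_char h2, dosetN_char h2 (-1) (neg_ne_zero.mpr one_ne_zero) (neg_one_ne_one' h2)]
  exact algebra_char h2 β hβ (x⁻¹ * Quotient.out c)

include h2 in
lemma master (x : GL2 p) (c : GL2 p ⧸ Nspl p) (e : GL2 p ⧸ Nspl' p) :
    (e ∈ QuotientGroup.mk '' (x • ((Nspl p : Set (GL2 p)) * (Nspl' p : Set (GL2 p)))) ∧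
      c ∈ QuotientGroup.mk '' ((Quotient.out e) • ((Nspl' p : Set (GL2 p)) * (Nspl p : Set (GL2 p)))))
    ↔ ∃ b : (ZMod p)ˣ, e = fmap x b ∧
        ((x⁻¹ * Quotient.out c : GL2 p) : Matrix (Fin 2) (Fin 2) (ZMod p)) 0 0 *
          ((x⁻¹ * Quotient.out c : GL2 p) : Matrix (Fin 2) (Fin 2) (ZMod p)) 0 1 * ((b : ZMod p))^2 =
        ((x⁻¹ * Quotient.out c : GL2 p) : Matrix (Fin 2) (Fin 2) (ZMod p)) 1 0 *
          ((x⁻¹ * Quotient.out c : GL2 p) : Matrix (Fin 2) (Fin 2) (ZMod p)) 1 1 := by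
  rw [mem_mk_image (S1_rinv) x e, mem_mk_image (S2_rinv) (Quotient.out e) c]
  constructor
  · rintro ⟨h1, hc2⟩
    obtain ⟨n, hn, m, hm, hnm⟩ := Set.mem_mul.mp h1
    have hm' : m ∈ Nspl' p := hm
    have hout : Quotient.out e = x * (n * m) := by rw [hnm]; group
    obtain ⟨b, hb⟩ : ∃ b : (ZMod p)ˣ, e = fmap x b := by
      rcases mono_cases ((mem_Nspl_iff h2 n).mp hn) with ⟨a, d, ha, hd, rfl⟩ |
        ⟨b', c', hb', hc', rfl⟩
      · refine ⟨Units.mk0 (d * a⁻¹) (mul_ne_zero hd (inv_ne_zero ha)), ?_⟩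
        have hfac : dU 1 (d * a⁻¹) one_ne_zero (mul_ne_zero hd (inv_ne_zero ha)) *
            dU a a ha ha = dU a d ha hd := by
          refine Units.ext ?_
          rw [Units.val_mul, dU_val, dU_val, dU_val, Matrix.mul_fin_two]
          refine M2ext ?_ ?_ ?_ ?_ <;> field_simp <;> ring
        have hsplit : Quotient.out e =
            (x * dU 1 (d * a⁻¹) one_ne_zero (mul_ne_zero hd (inv_ne_zero ha))) *
              (dU a a ha ha * m) := by
          rw [hout, ← hfac]; group
        rw [show e = QuotientGroup.mk (Quotient.out e) from (QuotientGroup.out_eq' e).symm,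
          hsplit]
        exact QuotientGroup.mk_mul_of_mem _ (Subgroup.mul_mem _ (scalar_mem_Nspl' a ha) hm')
      · refine ⟨Units.mk0 (c' * b'⁻¹) (mul_ne_zero hc' (inv_ne_zero hb')), ?_⟩
        have hfac : dU 1 (c' * b'⁻¹) one_ne_zero (mul_ne_zero hc' (inv_ne_zero hb')) *
            (dU b' b' hb' hb' * aU 1 1 one_ne_zero one_ne_zero) = aU b' c' hb' hc' := by
          refine Units.ext ?_
          rw [Units.val_mul, Units.val_mul, dU_val, dU_val, aU_val, aU_val,
            Matrix.mul_fin_two, Matrix.mul_fin_two]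
          refine M2ext ?_ ?_ ?_ ?_ <;> field_simp <;> ring
        have hsplit : Quotient.out e =
            (x * dU 1 (c' * b'⁻¹) one_ne_zero (mul_ne_zero hc' (inv_ne_zero hb'))) *
              (dU b' b' hb' hb' * (aU 1 1 one_ne_zero one_ne_zero * m)) := by
          rw [hout, ← hfac]; group
        rw [show e = QuotientGroup.mk (Quotient.out e) from (QuotientGroup.out_eq' e).symm,
          hsplit]
        exact QuotientGroup.mk_mul_of_mem _ (Subgroup.mul_mem _ (scalar_mem_Nspl' b' hb')
          (Subgroup.mul_mem _ (wU_mem_Nspl') hm'))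
    exact ⟨b, hb, (cond2_of_mk h2 x c (b : ZMod p) b.ne_zero e hb).mp hc2⟩
  · rintro ⟨b, hb, heq⟩
    have hk : (x * dU 1 (b : ZMod p) one_ne_zero b.ne_zero)⁻¹ * Quotient.out e ∈ Nspl' p :=
      QuotientGroup.eq.mp (by rw [QuotientGroup.out_eq']; exact hb.symm)
    constructor
    · have hsp : x⁻¹ * Quotient.out e = dU 1 (b : ZMod p) one_ne_zero b.ne_zero *
          ((x * dU 1 (b : ZMod p) one_ne_zero b.ne_zero)⁻¹ * Quotient.out e) := by group
      rw [hsp]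
      exact Set.mem_mul.mpr ⟨_, dU_mem_Nspl h2 _ _ _ _, _, hk, rfl⟩
    · exact (cond2_of_mk h2 x c (b : ZMod p) b.ne_zero e hb).mpr heq

-- neg of a unit
include h2 in
lemma fmap_neg (x : GL2 p) (b : (ZMod p)ˣ) : fmap x (-b) = fmap x b := by
  show QuotientGroup.mk _ = QuotientGroup.mk _
  rw [mk_eq_mk_iff h2 x (-b : (ZMod p)ˣ) (b : ZMod p) (Units.ne_zero _) (Units.ne_zero _)]
  right
  rw [Units.val_neg, neg_neg]

include h2 in
lemma fmap_eq_iff (x : GL2 p) (b b' : (ZMod p)ˣ) :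
    fmap x b = fmap x b' ↔ b' = b ∨ b' = -b := by
  show QuotientGroup.mk _ = QuotientGroup.mk _ ↔ _
  rw [mk_eq_mk_iff h2 x (b : ZMod p) (b' : ZMod p) (Units.ne_zero _) (Units.ne_zero _)]
  constructor
  · rintro (h | h)
    · left; exact Units.ext h
    · right; refine Units.ext ?_; rw [Units.val_neg]; exact h
  · rintro (rfl | rfl)
    · left; rfl
    · right; rw [Units.val_neg]

include h2 in
lemma count_mono (x : GL2 p) (A B C D : ZMod p)
    (hm : (B = 0 ∧ C = 0) ∨ (A = 0 ∧ D = 0)) :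
    2 * (Finset.univ.filter (fun e : GL2 p ⧸ Nspl' p =>
      ∃ b : (ZMod p)ˣ, e = fmap x b ∧ A * B * ((b : ZMod p))^2 = C * D)).card = p - 1 := by
  classical
  have hall : ∀ b : (ZMod p)ˣ, A * B * ((b : ZMod p))^2 = C * D := by
    rcases hm with ⟨e1, e2⟩ | ⟨e1, e2⟩ <;> intro b <;> rw [e1, e2] <;> ring
  have hmem2 : ∀ b : (ZMod p)ˣ, fmap x b ∈ (Finset.univ.filter (fun e : GL2 p ⧸ Nspl' p =>
      ∃ b : (ZMod p)ˣ, e = fmap x b ∧ A * B * ((b : ZMod p))^2 = C * D)) :=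
    fun b => Finset.mem_filter.mpr ⟨Finset.mem_univ _, ⟨b, rfl, hall b⟩⟩
  have hcard := Finset.card_eq_sum_card_fiberwise (s := (Finset.univ : Finset (ZMod p)ˣ))
    (f := fmap x) (fun b _ => hmem2 b)
  have hfib : ∀ e ∈ (Finset.univ.filter (fun e : GL2 p ⧸ Nspl' p =>
      ∃ b : (ZMod p)ˣ, e = fmap x b ∧ A * B * ((b : ZMod p))^2 = C * D)),
      (Finset.univ.filter (fun b : (ZMod p)ˣ => fmap x b = e)).card = 2 := by
    intro e he
    obtain ⟨b₀, hb₀, -⟩ := (Finset.mem_filter.mp he).2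
    have hset : Finset.univ.filter (fun b : (ZMod p)ˣ => fmap x b = e) = {b₀, -b₀} := by
      ext b
      simp only [Finset.mem_filter, Finset.mem_univ, true_and, Finset.mem_insert,
        Finset.mem_singleton]
      rw [hb₀, fmap_eq_iff h2]
      constructor
      · rintro (h | h)
        · exact Or.inl h.symm
        · exact Or.inr (by rw [h, neg_neg])
      · rintro (rfl | rfl)
        · exact Or.inl rfl
        · exact Or.inr (neg_neg b₀).symm
    rw [hset, Finset.card_insert_of_notMem, Finset.card_singleton]
    simp only [Finset.mem_singleton]
    intro hcl
    have hv : (b₀ : ZMod p) = -(b₀ : ZMod p) := by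
      conv_lhs => rw [hcl]
      rw [Units.val_neg]
    have : (2 : ZMod p) * (b₀ : ZMod p) = 0 := by linear_combination hv
    rcases mul_eq_zero.mp this with h | h
    · exact h2 h
    · exact b₀.ne_zero h
  have htotal : Fintype.card (ZMod p)ˣ = 2 * (Finset.univ.filter (fun e : GL2 p ⧸ Nspl' p =>
      ∃ b : (ZMod p)ˣ, e = fmap x b ∧ A * B * ((b : ZMod p))^2 = C * D)).card := by
    rw [← Finset.card_univ, hcard, Finset.sum_congr rfl hfib, Finset.sum_const, smul_eq_mul,
      mul_comm]
  rw [← ZMod.card_units p, htotal]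

include h2 in
lemma count_sq (x : GL2 p) (A B C D : ZMod p) (hdet : A * D - B * C ≠ 0)
    (hA : A ≠ 0) (hB : B ≠ 0) (hC : C ≠ 0) (hD : D ≠ 0)
    (hsq : IsSquare (A * D * (B * C)⁻¹)) :
    (Finset.univ.filter (fun e : GL2 p ⧸ Nspl' p =>
      ∃ b : (ZMod p)ˣ, e = fmap x b ∧ A * B * ((b : ZMod p))^2 = C * D)).card = 1 := by
  classical
  obtain ⟨r, hr⟩ := hsq
  have hr0 : r ≠ 0 := by
    intro h
    rw [h, mul_zero] at hr
    exact (mul_ne_zero (mul_ne_zero hA hD) (inv_ne_zero (mul_ne_zero hB hC))) hr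
  have hr' : A * D = r * r * (B * C) := by
    field_simp at hr
    linear_combination hr
  set b₀v : ZMod p := D * (B * r)⁻¹ with hb₀v
  have hb₀ : b₀v ≠ 0 := mul_ne_zero hD (inv_ne_zero (mul_ne_zero hB hr0))
  have heq₀ : A * B * b₀v^2 = C * D := by
    rw [hb₀v]
    field_simp
    linear_combination hr'
  rw [Finset.card_eq_one]
  refine ⟨fmap x (Units.mk0 b₀v hb₀), ?_⟩
  ext e
  simp only [Finset.mem_filter, Finset.mem_univ, true_and, Finset.mem_singleton]
  constructor
  · rintro ⟨b, rfl, heqb⟩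
    rw [fmap_eq_iff h2]
    have hsq' : ((b : ZMod p) - b₀v) * ((b : ZMod p) + b₀v) = 0 := by
      have hABne : A * B ≠ 0 := mul_ne_zero hA hB
      have : A * B * (((b : ZMod p))^2 - b₀v^2) = 0 := by linear_combination heqb - heq₀
      rcases mul_eq_zero.mp this with h | h
      · exact absurd h hABne
      · linear_combination h
    rcases mul_eq_zero.mp hsq' with h | h
    · left
      exact Units.ext (by rw [Units.val_mk0]; linear_combination -h)
    · right
      refine Units.ext ?_
      rw [Units.val_neg, Units.val_mk0]
      linear_combination h
  · rintro rfl
    exact ⟨Units.mk0 b₀v hb₀, rfl, by rw [Units.val_mk0]; exact heq₀⟩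

include h2 in
lemma count_nonsq (x : GL2 p) (A B C D : ZMod p)
    (hA : A ≠ 0) (hB : B ≠ 0) (hC : C ≠ 0) (hD : D ≠ 0)
    (hsq : ¬ IsSquare (A * D * (B * C)⁻¹)) :
    (Finset.univ.filter (fun e : GL2 p ⧸ Nspl' p =>
      ∃ b : (ZMod p)ˣ, e = fmap x b ∧ A * B * ((b : ZMod p))^2 = C * D)).card = 0 := by
  classical
  rw [Finset.card_eq_zero, Finset.eq_empty_iff_forall_notMem]
  rintro e he
  obtain ⟨b, -, heqb⟩ := (Finset.mem_filter.mp he).2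
  apply hsq
  refine ⟨D * (B * (b : ZMod p))⁻¹, ?_⟩
  have hbne : (b : ZMod p) ≠ 0 := b.ne_zero
  field_simp
  linear_combination heqb

omit [Fact p.Prime] in
lemma count_zero_aux {α : Type*} [Fintype α] [DecidableEq α] (P : α → Prop) [DecidablePred P]
    (h : ∀ a, ¬ P a) : (Finset.univ.filter P).card = 0 := by
  rw [Finset.card_eq_zero, Finset.eq_empty_iff_forall_notMem]
  intro a ha
  exact h a (Finset.mem_filter.mp ha).2

lemma eq_zero_mono (A B C D bv : ZMod p) (hb : bv ≠ 0) (hdet : A*D - B*C ≠ 0)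
    (heq : A*B*bv^2 = C*D) (hz : A = 0 ∨ B = 0 ∨ C = 0 ∨ D = 0) :
    (B = 0 ∧ C = 0) ∨ (A = 0 ∧ D = 0) := by
  rcases hz with h | h | h | h
  · have hBC : B * C ≠ 0 := fun hbc => hdet (by rw [h, hbc]; ring)
    have hCD : C * D = 0 := by rw [← heq, h]; ring
    rcases mul_eq_zero.mp hCD with h' | h'
    · exact absurd h' (right_ne_zero_of_mul hBC)
    · exact Or.inr ⟨h, h'⟩
  · have hAD : A * D ≠ 0 := fun had => hdet (by rw [h, had]; ring)
    have hCD : C * D = 0 := by rw [← heq, h]; ring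
    rcases mul_eq_zero.mp hCD with h' | h'
    · exact Or.inl ⟨h, h'⟩
    · exact absurd h' (right_ne_zero_of_mul hAD)
  · have hAD : A * D ≠ 0 := fun had => hdet (by rw [h, had]; ring)
    have hAB : A * B * bv^2 = 0 := by rw [heq, h]; ring
    rcases mul_eq_zero.mp hAB with h' | h'
    · rcases mul_eq_zero.mp h' with h'' | h''
      · exact absurd h'' (left_ne_zero_of_mul hAD)
      · exact Or.inl ⟨h'', h⟩
    · exact absurd h' (pow_ne_zero 2 hb)
  · have hBC : B * C ≠ 0 := fun hbc => hdet (by rw [h, hbc]; ring)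
    have hAB : A * B * bv^2 = 0 := by rw [heq, h]; ring
    rcases mul_eq_zero.mp hAB with h' | h'
    · rcases mul_eq_zero.mp h' with h'' | h''
      · exact Or.inr ⟨h'', h⟩
      · exact absurd h'' (left_ne_zero_of_mul hBC)
    · exact absurd h' (pow_ne_zero 2 hb)

include h2 in
lemma key_count (hp1 : 1 ≤ p) (Tr : Finset (ZMod p))
    (hTr1 : ∀ t ∈ Tr, t ≠ 1 ∧ t ≠ 0 ∧ IsSquare t)
    (hTr2 : ∀ s : ZMod p, s ≠ 1 → s ≠ 0 → IsSquare s → ∃! t, t ∈ Tr ∧ (t = s ∨ t = s⁻¹))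
    (x : GL2 p) (c : GL2 p ⧸ Nspl p) :
    ((Finset.univ.filter (fun e : GL2 p ⧸ Nspl' p =>
        e ∈ QuotientGroup.mk '' (x • ((Nspl p : Set (GL2 p)) * (Nspl' p : Set (GL2 p)))) ∧
        c ∈ QuotientGroup.mk '' ((Quotient.out e) •
          ((Nspl' p : Set (GL2 p)) * (Nspl p : Set (GL2 p)))))).card : ℤ)
      = (((p : ℤ) - 1) / 2) *
          (if c ∈ QuotientGroup.mk '' (x • (Nspl p : Set (GL2 p))) then 1 else 0)
        + ∑ t ∈ Tr, (if c ∈ QuotientGroup.mk '' (x • dosetN p t) then 1 else 0) := by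
  classical
  have hN : (c ∈ QuotientGroup.mk '' (x • (Nspl p : Set (GL2 p)))) ↔
      x⁻¹ * Quotient.out c ∈ Nspl p := mem_mk_image (N_rinv) x c
  have hT : ∀ t ∈ Tr, ((c ∈ QuotientGroup.mk '' (x • dosetN p t)) ↔
      x⁻¹ * Quotient.out c ∈ dosetN p t) :=
    fun t ht => mem_mk_image (dosetN_rinv t (hTr1 t ht).1) x c
  have hfe : (Finset.univ.filter (fun e : GL2 p ⧸ Nspl' p =>
        e ∈ QuotientGroup.mk '' (x • ((Nspl p : Set (GL2 p)) * (Nspl' p : Set (GL2 p)))) ∧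
        c ∈ QuotientGroup.mk '' ((Quotient.out e) •
          ((Nspl' p : Set (GL2 p)) * (Nspl p : Set (GL2 p))))))
      = Finset.univ.filter (fun e : GL2 p ⧸ Nspl' p =>
        ∃ b : (ZMod p)ˣ, e = fmap x b ∧
          ((x⁻¹ * Quotient.out c : GL2 p) : Matrix (Fin 2) (Fin 2) (ZMod p)) 0 0 *
            ((x⁻¹ * Quotient.out c : GL2 p) : Matrix (Fin 2) (Fin 2) (ZMod p)) 0 1 *
              ((b : ZMod p))^2 =
          ((x⁻¹ * Quotient.out c : GL2 p) : Matrix (Fin 2) (Fin 2) (ZMod p)) 1 0 *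
            ((x⁻¹ * Quotient.out c : GL2 p) : Matrix (Fin 2) (Fin 2) (ZMod p)) 1 1) :=
    Finset.filter_congr (fun e _ => master h2 x c e)
  rw [hfe]
  have hdet := det_ne (x⁻¹ * Quotient.out c)
  set A := ((x⁻¹ * Quotient.out c : GL2 p) : Matrix (Fin 2) (Fin 2) (ZMod p)) 0 0 with hAe
  set B := ((x⁻¹ * Quotient.out c : GL2 p) : Matrix (Fin 2) (Fin 2) (ZMod p)) 0 1 with hBe
  set C := ((x⁻¹ * Quotient.out c : GL2 p) : Matrix (Fin 2) (Fin 2) (ZMod p)) 1 0 with hCe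
  set D := ((x⁻¹ * Quotient.out c : GL2 p) : Matrix (Fin 2) (Fin 2) (ZMod p)) 1 1 with hDe
  by_cases hmono : (B = 0 ∧ C = 0) ∨ (A = 0 ∧ D = 0)
  · -- monomial case
    have hNmem : x⁻¹ * Quotient.out c ∈ Nspl p := by
      rw [mem_Nspl_iff h2]
      exact hmono
    have ht0 : ∀ t ∈ Tr, ¬(c ∈ QuotientGroup.mk '' (x • dosetN p t)) := by
      intro t ht hmem
      have hd := (dosetN_char h2 t (hTr1 t ht).2.1 (hTr1 t ht).1 _).mp ((hT t ht).mp hmem)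
      rcases hmono with ⟨e1, e2⟩ | ⟨e1, e2⟩
      · exact hd.1.2.1 e1
      · exact hd.1.1 e1
    rw [if_pos (hN.mpr hNmem), Finset.sum_congr rfl (fun t ht => if_neg (ht0 t ht)),
      Finset.sum_const_zero, add_zero, mul_one]
    have hcnt := count_mono h2 x A B C D hmono
    have hcast : 2 * ((Finset.univ.filter (fun e : GL2 p ⧸ Nspl' p =>
        ∃ b : (ZMod p)ˣ, e = fmap x b ∧ A * B * ((b : ZMod p))^2 = C * D)).card : ℤ)
        = (p : ℤ) - 1 := by
      have := congrArg (Nat.cast (R := ℤ)) hcnt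
      push_cast [Nat.cast_sub hp1] at this
      linarith [this]
    omega
  · -- non-monomial
    have hNne : ¬(c ∈ QuotientGroup.mk '' (x • (Nspl p : Set (GL2 p)))) := by
      intro hmem
      exact hmono ((mem_Nspl_iff h2 _).mp (hN.mp hmem))
    rw [if_neg hNne, mul_zero, zero_add]
    by_cases hz : A = 0 ∨ B = 0 ∨ C = 0 ∨ D = 0
    · have hcard0 : (Finset.univ.filter (fun e : GL2 p ⧸ Nspl' p =>
          ∃ b : (ZMod p)ˣ, e = fmap x b ∧ A * B * ((b : ZMod p))^2 = C * D)).card = 0 := by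
        apply count_zero_aux
        rintro e ⟨b, -, heqb⟩
        exact hmono (eq_zero_mono A B C D (b : ZMod p) b.ne_zero hdet heqb hz)
      have hts : ∀ t ∈ Tr, ¬(c ∈ QuotientGroup.mk '' (x • dosetN p t)) := by
        intro t ht hmem
        have hd := (dosetN_char h2 t (hTr1 t ht).2.1 (hTr1 t ht).1 _).mp ((hT t ht).mp hmem)
        obtain ⟨⟨n1, n2, n3, n4⟩, -⟩ := hd
        rcases hz with h | h | h | h
        · exact n1 h
        · exact n2 h
        · exact n3 h
        · exact n4 h
      rw [hcard0, Finset.sum_congr rfl (fun t ht => if_neg (hts t ht)), Finset.sum_const_zero]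
      simp
    · push_neg at hz
      obtain ⟨hA0, hB0, hC0, hD0⟩ := hz
      have hBCne : B * C ≠ 0 := mul_ne_zero hB0 hC0
      have hADne : A * D ≠ 0 := mul_ne_zero hA0 hD0
      have hs0 : A * D * (B * C)⁻¹ ≠ 0 := mul_ne_zero hADne (inv_ne_zero hBCne)
      have hs1 : A * D * (B * C)⁻¹ ≠ 1 := by
        intro h
        apply hdet
        field_simp at h
        linear_combination h
      have hiff : ∀ t ∈ Tr, ((c ∈ QuotientGroup.mk '' (x • dosetN p t)) ↔
          (t = A * D * (B * C)⁻¹ ∨ t = (A * D * (B * C)⁻¹)⁻¹)) := by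
        intro t ht
        rw [hT t ht, dosetN_char h2 t (hTr1 t ht).2.1 (hTr1 t ht).1]
        constructor
        · rintro ⟨-, hpc | hpc⟩ <;> rw [← hAe, ← hBe, ← hCe, ← hDe] at hpc
          · left; field_simp
            first
            | linear_combination hpc
            | linear_combination -hpc
            | linear_combination B * C * hpc
            | linear_combination -(B * C) * hpc
          · right
            rw [show (A * D * (B * C)⁻¹)⁻¹ = B * C * (A * D)⁻¹ by field_simp]
            field_simp
            first
            | linear_combination hpc
            | linear_combination -hpc
            | linear_combination A * D * hpc
            | linear_combination -(A * D) * hpc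
        · rintro (rfl | rfl)
          · refine ⟨⟨hA0, hB0, hC0, hD0⟩, Or.inl ?_⟩
            rw [← hAe, ← hBe, ← hCe, ← hDe]
            field_simp
          · refine ⟨⟨hA0, hB0, hC0, hD0⟩, Or.inr ?_⟩
            rw [← hAe, ← hBe, ← hCe, ← hDe,
              show (A * D * (B * C)⁻¹)⁻¹ = B * C * (A * D)⁻¹ by field_simp]
            field_simp
      have hsum : (∑ t ∈ Tr, (if c ∈ QuotientGroup.mk '' (x • dosetN p t) then (1:ℤ) else 0))
          = ((Tr.filter (fun t => t = A * D * (B * C)⁻¹ ∨ t = (A * D * (B * C)⁻¹)⁻¹)).card : ℤ) := by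
        rw [Finset.sum_congr rfl (fun t ht => if_congr (hiff t ht) rfl rfl), Finset.sum_boole]
      rw [hsum]
      by_cases hsq : IsSquare (A * D * (B * C)⁻¹)
      · obtain ⟨t₀, ⟨ht₀Tr, ht₀eq⟩, ht₀uniq⟩ := hTr2 _ hs1 hs0 hsq
        have h1 : (Tr.filter (fun t => t = A * D * (B * C)⁻¹ ∨
            t = (A * D * (B * C)⁻¹)⁻¹)).card = 1 := by
          rw [Finset.card_eq_one]
          refine ⟨t₀, ?_⟩
          ext t
          simp only [Finset.mem_filter, Finset.mem_singleton]
          constructor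
          · rintro ⟨h1', h2'⟩
            exact ht₀uniq t ⟨h1', h2'⟩
          · rintro rfl
            exact ⟨ht₀Tr, ht₀eq⟩
        rw [h1, count_sq h2 x A B C D hdet hA0 hB0 hC0 hD0 hsq]
      · have h0 : (Tr.filter (fun t => t = A * D * (B * C)⁻¹ ∨
            t = (A * D * (B * C)⁻¹)⁻¹)).card = 0 := by
          rw [Finset.card_eq_zero, Finset.eq_empty_iff_forall_notMem]
          intro t ht'
          obtain ⟨htTr, hteq⟩ := Finset.mem_filter.mp ht'
          obtain ⟨-, -, htsq⟩ := hTr1 t htTr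
          rcases hteq with h | h
          · rw [h] at htsq
            exact hsq htsq
          · rw [h] at htsq
            obtain ⟨r, hrr⟩ := htsq
            exact hsq ⟨r⁻¹, by rw [← mul_inv, ← hrr, inv_inv]⟩
        rw [h0, count_nonsq h2 x A B C D hA0 hB0 hC0 hD0 hsq]

lemma T_apply (R : Type) [CommRing R] {G : Type} [Group G] [Fintype G] (H K : Subgroup G)
    (S : Set G) (v : (G ⧸ H) → R) (c : G ⧸ K) :
    T R H K S v c = ∑ d : G ⧸ H,
      v d * (if c ∈ QuotientGroup.mk '' ((Quotient.out d) • S) then 1 else 0) := rfl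

lemma ite_one_mul_ite_one (P Q : Prop) [Decidable P] [Decidable Q] :
    (if P then (1:ℤ) else 0) * (if Q then 1 else 0) = if P ∧ Q then 1 else 0 := by
  by_cases hP : P <;> by_cases hQ : Q <;> simp [hP, hQ]
end Chen

set_option synthInstance.maxHeartbeats 1000000
set_option maxHeartbeats 3200000

open Chen in
/-- **Lemma 8.3.** In `ℤ[N\\G/N]`, the composite operator `NN'' × N''N` (through `ℤ[G/N'']`,
where `N''` is the normalizer of the split Cartan `C'' = {[[x,y],[y,x]]}`) equals
`((p−1)/2)·N + Σ_t Nσ_tN`, the sum over representatives `t` of the classes `t ∼ t⁻¹` of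
nonzero squares `t ∈ 𝔽_p ∖ {1}`. -/
theorem NNsecond_op_decomposition (p : ℕ) [Fact p.Prime] (hodd : Odd p)
    (Tr : Finset (ZMod p))
    (hTr1 : ∀ t ∈ Tr, t ≠ 1 ∧ t ≠ 0 ∧ IsSquare t)
    (hTr2 : ∀ s : ZMod p, s ≠ 1 → s ≠ 0 → IsSquare s → ∃! t, t ∈ Tr ∧ (t = s ∨ t = s⁻¹)) :
    (T ℤ (Nspl' p) (Nspl p) (((Nspl' p : Set (GL2 p)) * (Nspl p : Set (GL2 p))))).comp
      (T ℤ (Nspl p) (Nspl' p) (((Nspl p : Set (GL2 p)) * (Nspl' p : Set (GL2 p))))) =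
    (((p : ℤ) - 1) / 2) • T ℤ (Nspl p) (Nspl p) ((Nspl p : Set (GL2 p))) +
      ∑ t ∈ Tr, T ℤ (Nspl p) (Nspl p) (dosetN p t) := by
  classical
  have hp := (Fact.out : p.Prime)
  have h2 : (2 : ZMod p) ≠ 0 := by
    intro h
    have h' : ((2 : ℕ) : ZMod p) = 0 := by exact_mod_cast h
    have hdvd : p ∣ 2 := (ZMod.natCast_eq_zero_iff 2 p).mp h'
    obtain ⟨k, hk⟩ := hodd
    have h2le := Nat.le_of_dvd two_pos hdvd
    have := hp.two_le
    omega
  have hp1 : 1 ≤ p := hp.two_le.trans' (by omega)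
  apply LinearMap.ext
  intro v
  funext cc
  rw [LinearMap.comp_apply]
  simp only [LinearMap.add_apply, LinearMap.smul_apply, LinearMap.coe_sum, Finset.sum_apply,
    Pi.add_apply, Pi.smul_apply, smul_eq_mul, T_apply]
  simp only [Finset.sum_mul]
  rw [Finset.sum_comm]
  conv_rhs => rw [Finset.mul_sum, Finset.sum_comm]
  rw [← Finset.sum_add_distrib]
  refine Finset.sum_congr rfl (fun d _ => ?_)
  simp only [mul_assoc]
  rw [← Finset.mul_sum]
  have h1 : (∑ e : GL2 p ⧸ Nspl' p,
      (if e ∈ QuotientGroup.mk '' (Quotient.out d • ((Nspl p : Set (GL2 p)) * (Nspl' p : Set (GL2 p)))) then (1:ℤ) else 0) *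
      (if cc ∈ QuotientGroup.mk '' (Quotient.out e • ((Nspl' p : Set (GL2 p)) * (Nspl p : Set (GL2 p)))) then 1 else 0))
      = ((Finset.univ.filter (fun e : GL2 p ⧸ Nspl' p =>
        e ∈ QuotientGroup.mk '' (Quotient.out d • ((Nspl p : Set (GL2 p)) * (Nspl' p : Set (GL2 p)))) ∧
        cc ∈ QuotientGroup.mk '' ((Quotient.out e) •
          ((Nspl' p : Set (GL2 p)) * (Nspl p : Set (GL2 p)))))).card : ℤ) := by
    rw [← Finset.sum_boole]
    exact Finset.sum_congr rfl (fun e _ => ite_one_mul_ite_one _ _)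
  rw [h1, key_count h2 hp1 Tr hTr1 hTr2 (Quotient.out d) cc, mul_add, Finset.mul_sum]
  congr 1
  ring
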